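/- arXiv:2302.09905 — 2 statements merged into one kernel-verified Lean document; each statement's English description precedes it below -/
import Mathlib

section
/- For a qubit state ρ with smaller eigenvalue λ_− ∈ [0, 1/2] and Hamiltonian H = E|1⟩⟨1|, E > 0, and any p ≥ 2, the capacity and Tsallis entropy T_p(ρ) = (1 − λ_−^p − (1−λ_−)^p)/(p−1) satisfy C(ρ; H)/E + T_p(ρ) ≤ 1. -/
/-! Bernoulli's inequality `(1 - λ)^p ≥ 1 - pλ` bounds the Tsallis entropy by
`pλ / (p - 1) ≤ 2λ` once `p ≥ 2`, while the normalized capacity is exactly `1 - 2λ`. -/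

theorem tsallis_two_point_le_two_mul {x p : ℝ} (hx0 : 0 ≤ x) (hx1 : x ≤ 1) (hp : 2 ≤ p) :
    (1 - x ^ p - (1 - x) ^ p) / (p - 1) ≤ 2 * x := by
  have bernoulli : 1 + p * -x ≤ (1 + -x) ^ p :=
    one_add_mul_self_le_rpow_one_add (by linarith) (by linarith)
  rw [← sub_eq_add_neg] at bernoulli
  rw [div_le_iff₀ (by linarith)]
  nlinarith [Real.rpow_nonneg hx0 p, mul_nonneg hx0 (sub_nonneg.2 hp)]

/-- for a qubit with smaller eigenvalue λ₋ ∈ [0,1/2], H = E|1⟩⟨1| with E > 0,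
and any p ≥ 2, the capacity C = E(1 − 2λ₋) and Tsallis entropy satisfy C/E + T_p ≤ 1. -/
theorem capacity_plus_tsallis_le_one (lam E p : ℝ) (hlam : lam ∈ Set.Icc (0:ℝ) (1/2))
    (hE : 0 < E) (hp : 2 ≤ p) :
    (E * (1 - 2 * lam)) / E +
      (1 - lam ^ p - (1 - lam) ^ p) / (p - 1) ≤ 1 := by
  obtain ⟨hlam0, hlam1⟩ := hlam
  rw [mul_div_cancel_left₀ _ hE.ne']
  linarith [tsallis_two_point_le_two_mul hlam0 (by linarith) hp]
end

section
/- For a qubit state ρ with diagonal entries 1−q, q and off-diagonal magnitude c, with Hamiltonian H = E|1⟩⟨1|, the capacity decomposes as C(ρ; H)² = C(ρ_inc; H)² + E²·(2c)², where ρ_inc is the dephased (diagonal) state with capacity C(ρ_inc; H) = |1−2q|E. -/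
theorem capacity_sq_decomposition_general (q c E : ℝ) :
    (E * Real.sqrt ((2 * q - 1) ^ 2 + 4 * c ^ 2)) ^ 2
      = (|1 - 2 * q| * E) ^ 2 + E ^ 2 * (2 * c) ^ 2 := by
  rw [mul_pow, Real.sq_sqrt (by positivity), mul_pow, sq_abs]
  ring

/-- the qubit capacity C = E√((2q−1)² + 4c²) decomposes as
C² = C_inc² + E²·(2c)², where C_inc = |1−2q|·E is the capacity of the dephased state
and 2c is the l₁-norm of coherence. -/
theorem capacity_sq_decomposition (q c E : ℝ) (hq : q ∈ Set.Icc (0:ℝ) 1)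
    (hc : c ∈ Set.Icc (0:ℝ) (Real.sqrt (q * (1 - q)))) (hE : 0 ≤ E) :
    (E * Real.sqrt ((2 * q - 1) ^ 2 + 4 * c ^ 2)) ^ 2
      = (|1 - 2 * q| * E) ^ 2 + E ^ 2 * (2 * c) ^ 2 :=
  capacity_sq_decomposition_general q c E
end
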